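/- arXiv:1601.04429 — 12 statements merged into one kernel-verified Lean document; each statement's English description precedes it below -/
import Mathlib

section
/- Let {p_k} ⊂ (0,2] be a sequence of exponents, let x ∈ ℓ^{p_k}, and let {x^n} be a sequence of elements of ℓ^{p_k} (each x^n a real sequence with ∑_k |x^n_k|^{p_k} < ∞) such that x^n_k → x_k as n → ∞ for every fixed k, and ∑_k |x^n_k|^{p_k} → ∑_k |x_k|^{p_k} as n → ∞. Then ∑_k |x^n_k − x_k|^{p_k} → 0 as n → ∞ (the sums of the nonnegative series being taken in the extended reals [0,∞]). -/
/-!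
Writing `F n k = |x^n_k - x_k|^{p_k}` and `G n k = 4 (|x^n_k|^{p_k} + |x_k|^{p_k})`, the bound
`|a - b|^p ≤ 2^p (|a|^p + |b|^p) ≤ 4 (|a|^p + |b|^p)` (this is where `p_k ≤ 2` enters) gives
`F ≤ G`, while `F n → 0` and `G n → 8 |x|^p` pointwise and `∑ G n → ∑ 8 |x|^p` by hypothesis.
Fatou's lemma applied to `G n - F n` then shows `∑ (G n - F n) → ∑ 8 |x|^p` as well, so that
`∑ F n = ∑ G n - ∑ (G n - F n) → 0` (generalized dominated convergence).
-/

open Filter Topology ENNReal MeasureTheory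

theorem ENNReal.tendsto_zero_of_tendsto_add {α : Type*} {l : Filter α} {a b : α → ℝ≥0∞}
    {c : ℝ≥0∞} (hc : c ≠ ∞) (hab : Tendsto (fun n => a n + b n) l (𝓝 c))
    (hb : Tendsto b l (𝓝 c)) : Tendsto a l (𝓝 0) := by
  have hsub := ENNReal.Tendsto.sub hab hb (Or.inl hc)
  rw [tsub_self] at hsub
  refine hsub.congr' ?_
  filter_upwards [hb.eventually_ne hc] with n hn using ENNReal.add_sub_cancel_right hn

theorem MeasureTheory.tendsto_lintegral_zero_of_le_of_tendsto_lintegral {α : Type*}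
    [MeasurableSpace α] {μ : Measure α} {F G : ℕ → α → ℝ≥0∞} {g : α → ℝ≥0∞}
    (hF : ∀ n, Measurable (F n)) (hG : ∀ n, Measurable (G n)) (hFG : ∀ n, F n ≤ᵐ[μ] G n)
    (hF_lim : ∀ᵐ a ∂μ, Tendsto (fun n => F n a) atTop (𝓝 0))
    (hG_lim : ∀ᵐ a ∂μ, Tendsto (fun n => G n a) atTop (𝓝 (g a)))
    (hG_int : Tendsto (fun n => ∫⁻ a, G n a ∂μ) atTop (𝓝 (∫⁻ a, g a ∂μ)))
    (hg : ∫⁻ a, g a ∂μ ≠ ∞) :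
    Tendsto (fun n => ∫⁻ a, F n a ∂μ) atTop (𝓝 0) := by
  set H := fun n => G n - F n
  have hH_le : ∀ n, ∫⁻ a, H n a ∂μ ≤ ∫⁻ a, G n a ∂μ := fun n =>
    lintegral_mono fun _ => tsub_le_self
  have hH_fatou : ∫⁻ a, g a ∂μ ≤ liminf (fun n => ∫⁻ a, H n a ∂μ) atTop := calc
    ∫⁻ a, g a ∂μ = ∫⁻ a, liminf (fun n => H n a) atTop ∂μ := by
      refine lintegral_congr_ae ?_
      filter_upwards [hF_lim, hG_lim] with a hFa hGa
      simpa [H] using (ENNReal.Tendsto.sub hGa hFa (Or.inr zero_ne_top)).liminf_eq.symm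
    _ ≤ liminf (fun n => ∫⁻ a, H n a ∂μ) atTop :=
      lintegral_liminf_le fun n => (hG n).sub (hF n)
  have hH_int : Tendsto (fun n => ∫⁻ a, H n a ∂μ) atTop (𝓝 (∫⁻ a, g a ∂μ)) :=
    tendsto_of_le_liminf_of_limsup_le hH_fatou
      ((limsup_le_limsup (Eventually.of_forall hH_le)).trans_eq hG_int.limsup_eq)
  refine ENNReal.tendsto_zero_of_tendsto_add hg (hG_int.congr fun n => ?_) hH_int
  rw [← lintegral_add_left (hF n)]
  refine lintegral_congr_ae ?_
  filter_upwards [hFG n] with a ha using (add_tsub_cancel_of_le ha).symm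

theorem ENNReal.tendsto_tsum_zero_of_le_of_tendsto_tsum {ι : Type*} {F G : ℕ → ι → ℝ≥0∞}
    {g : ι → ℝ≥0∞} (hFG : ∀ n, F n ≤ G n) (hF_lim : ∀ i, Tendsto (fun n => F n i) atTop (𝓝 0))
    (hG_lim : ∀ i, Tendsto (fun n => G n i) atTop (𝓝 (g i)))
    (hG_sum : Tendsto (fun n => ∑' i, G n i) atTop (𝓝 (∑' i, g i))) (hg : ∑' i, g i ≠ ∞) :
    Tendsto (fun n => ∑' i, F n i) atTop (𝓝 0) := by
  let _ : MeasurableSpace ι := ⊤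
  simp only [← lintegral_count] at hG_sum hg ⊢
  exact tendsto_lintegral_zero_of_le_of_tendsto_lintegral (fun _ => .of_discrete)
    (fun _ => .of_discrete) (fun n => .of_forall (hFG n)) (.of_forall hF_lim)
    (.of_forall hG_lim) hG_sum hg

theorem Real.abs_sub_rpow_le {p : ℝ} (hp : 0 ≤ p) (a b : ℝ) :
    |a - b| ^ p ≤ 2 ^ p * (|a| ^ p + |b| ^ p) := calc
  |a - b| ^ p ≤ (2 * max |a| |b|) ^ p := by
    gcongr
    rw [two_mul]
    exact (abs_sub a b).trans (add_le_add (le_max_left _ _) (le_max_right _ _))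
  _ = 2 ^ p * max (|a| ^ p) (|b| ^ p) := by
    rw [Real.mul_rpow zero_le_two (le_max_of_le_left (abs_nonneg a)),
      Real.rpow_max (abs_nonneg a) (abs_nonneg b) hp]
  _ ≤ 2 ^ p * (|a| ^ p + |b| ^ p) := by
    gcongr
    exact max_le_add_of_nonneg (by positivity) (by positivity)

theorem ENNReal.ofReal_abs_sub_rpow_le {p : ℝ} (hp0 : 0 ≤ p) (hp2 : p ≤ 2) (a b : ℝ) :
    ENNReal.ofReal (|a - b| ^ p) ≤ 4 * (ENNReal.ofReal (|a| ^ p) + ENNReal.ofReal (|b| ^ p)) := by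
  have h2p : (2 : ℝ) ^ p ≤ 4 :=
    (Real.rpow_le_rpow_of_exponent_le one_le_two hp2).trans_eq (by norm_num [Real.rpow_two])
  rw [← ENNReal.ofReal_add (by positivity) (by positivity), ← ENNReal.ofReal_ofNat 4,
    ← ENNReal.ofReal_mul zero_le_four]
  exact ENNReal.ofReal_le_ofReal ((Real.abs_sub_rpow_le hp0 a b).trans
    (mul_le_mul_of_nonneg_right h2p (by positivity)))

theorem Filter.Tendsto.ofReal_abs_rpow {α : Type*} {l : Filter α} {u : α → ℝ} {a p : ℝ}
    (hu : Tendsto u l (𝓝 a)) (hp : 0 ≤ p) :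
    Tendsto (fun n => ENNReal.ofReal (|u n| ^ p)) l (𝓝 (ENNReal.ofReal (|a| ^ p))) :=
  ENNReal.tendsto_ofReal (hu.abs.rpow_const (Or.inr hp))

/-- STATEMENT 1 (Kadec–Klee / Radon–Riesz property of `ℓ^{p_k}`, `p_k ∈ (0,2]`):
if `x ∈ ℓ^{p_k}`, each `x^n ∈ ℓ^{p_k}`, `x^n_k → x_k` componentwise and
`∑_k |x^n_k|^{p_k} → ∑_k |x_k|^{p_k}`, then `∑_k |x^n_k − x_k|^{p_k} → 0`
(the nonnegative series being summed in `[0,∞]`). -/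
theorem stmt_1 (p : ℕ → ℝ) (hp0 : ∀ k, 0 < p k) (hp2 : ∀ k, p k ≤ 2)
    (x : ℕ → ℝ) (hx : Summable fun k => |x k| ^ p k)
    (X : ℕ → ℕ → ℝ) (hX : ∀ n, Summable fun k => |X n k| ^ p k)
    (hcomp : ∀ k, Tendsto (fun n => X n k) atTop (𝓝 (x k)))
    (hnorm : Tendsto (fun n => ∑' k, |X n k| ^ p k) atTop (𝓝 (∑' k, |x k| ^ p k))) :
    Tendsto (fun n => ∑' k, ENNReal.ofReal (|X n k - x k| ^ p k)) atTop (𝓝 0) := by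
  have hG_tsum : ∀ y : ℕ → ℝ, (Summable fun k => |y k| ^ p k) →
      ∑' k, 4 * (ENNReal.ofReal (|y k| ^ p k) + ENNReal.ofReal (|x k| ^ p k)) =
        4 * (ENNReal.ofReal (∑' k, |y k| ^ p k) + ENNReal.ofReal (∑' k, |x k| ^ p k)) := by
    intro y hy
    rw [ENNReal.tsum_mul_left, ENNReal.tsum_add,
      ENNReal.ofReal_tsum_of_nonneg (fun k => by positivity) hy,
      ENNReal.ofReal_tsum_of_nonneg (fun k => by positivity) hx]
  refine ENNReal.tendsto_tsum_zero_of_le_of_tendsto_tsum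
    (fun n k => ENNReal.ofReal_abs_sub_rpow_le (hp0 k).le (hp2 k) (X n k) (x k))
    (fun k => by
      simpa [(hp0 k).ne'] using (tendsto_sub_nhds_zero_iff.2 (hcomp k)).ofReal_abs_rpow (hp0 k).le)
    (fun k => ENNReal.Tendsto.const_mul (((hcomp k).ofReal_abs_rpow (hp0 k).le).add_const _)
      (Or.inr ofNat_ne_top)) ?_ ?_
  · rw [hG_tsum x hx]
    simp only [hG_tsum _ (hX _)]
    exact ENNReal.Tendsto.const_mul ((ENNReal.tendsto_ofReal hnorm).add_const _)
      (Or.inr ofNat_ne_top)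
  · rw [hG_tsum x hx]
    finiteness
end

section
/- Let {q_k} be a sequence of real numbers with 1 < q_k ≤ 2 for all k and q_k → 1 as k → ∞. Then ℓ^{q_k} ⊆ ⋂_{p>1} ℓ^p; that is, for every real sequence x = {x_k}, if ∑_k |x_k|^{q_k} < ∞ then for every real p > 1 the series ∑_k |x_k|^p converges. -/
open Filter Topology

/-! Since `∑ |x k| ^ q k` converges, `|x k| ^ q k < 1` for large `k`, which forces `|x k| ≤ 1`;
and `q k → 1 < p` gives `q k ≤ p` for large `k`. For such `k`, `|x k| ^ p ≤ |x k| ^ q k`,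
so `∑ |x k| ^ p` converges by comparison. -/

namespace Real

lemma le_one_of_rpow_lt_one {a q : ℝ} (hq : 0 ≤ q) (h : a ^ q < 1) : a ≤ 1 := by
  by_contra! ha1
  exact (one_le_rpow ha1.le hq).not_gt h

lemma rpow_le_rpow_of_rpow_lt_one {a p q : ℝ} (ha : 0 ≤ a) (hq : 0 ≤ q) (hqp : q ≤ p)
    (h : a ^ q < 1) : a ^ p ≤ a ^ q :=
  rpow_le_rpow_of_exponent_ge' ha (le_one_of_rpow_lt_one hq h) hq hqp

end Real

theorem summable_abs_rpow_of_eventually_exponent_le {ι : Type*} {x : ι → ℝ} {q : ι → ℝ} {p : ℝ}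
    (hq : ∀ i, 0 ≤ q i) (hqp : ∀ᶠ i in cofinite, q i ≤ p)
    (hx : Summable fun i => |x i| ^ q i) : Summable fun i => |x i| ^ p := by
  refine hx.of_norm_bounded_eventually ?_
  filter_upwards [hqp, hx.tendsto_cofinite_zero.eventually_lt_const one_pos] with i hqpi hlt
  rw [Real.norm_of_nonneg (Real.rpow_nonneg (abs_nonneg _) _)]
  exact Real.rpow_le_rpow_of_rpow_lt_one (abs_nonneg _) (hq i) hqpi hlt

theorem stmt_2_general (q : ℕ → ℝ) (hq1 : ∀ k, 1 < q k)
    (hqlim : Tendsto q atTop (𝓝 1))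
    (x : ℕ → ℝ) (hx : Summable fun k => |x k| ^ q k) :
    ∀ p : ℝ, 1 < p → Summable fun k => |x k| ^ p := by
  intro p hp
  have hqp : ∀ᶠ k in cofinite, q k ≤ p := by
    rw [Nat.cofinite_eq_atTop]
    exact hqlim.eventually_le_const hp
  exact summable_abs_rpow_of_eventually_exponent_le (fun k => zero_le_one.trans (hq1 k).le) hqp hx

/-- if `1 < q k ≤ 2` for all `k` and `q k → 1`, then
`ℓ^{q_k} ⊆ ⋂_{p>1} ℓ^p`: summability of `∑ |x k| ^ q k` implies summability of
`∑ |x k| ^ p` for every real `p > 1`. -/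
theorem stmt_2 (q : ℕ → ℝ) (hq1 : ∀ k, 1 < q k) (hq2 : ∀ k, q k ≤ 2)
    (hqlim : Tendsto q atTop (𝓝 1))
    (x : ℕ → ℝ) (hx : Summable fun k => |x k| ^ q k) :
    ∀ p : ℝ, 1 < p → Summable fun k => |x k| ^ p :=
  stmt_2_general q hq1 hqlim x hx
end

section
/- Let {q_k} be a sequence of real numbers with 1 < q_k ≤ 2 for all k ≥ 1 and q_k → 1 as k → ∞, and define the sequence x by x_k = k^{-1/q_k} for k ≥ 1. Then the series ∑_k |x_k|^{q_k} diverges (indeed each term equals 1/k), while for every real p > 1 the series ∑_k |x_k|^p converges. In particular the inclusion ℓ^{q_k} ⊆ ⋂_{p>1} ℓ^p is strict. -/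
open Filter Topology

/-! Each `|x k| ^ p` equals `k ^ (-(p / q k))`. For `p = q k` this is the harmonic series, while
for fixed `p > 1` the exponents `p / q k` tend to `p > 1`, so eventually they exceed some
`r > 1` and the terms are dominated by the convergent `k ^ (-r)`. -/

lemma abs_rpow_neg_one_div_rpow {a : ℝ} (ha : 0 ≤ a) (p q : ℝ) :
    |a ^ (-(1 / q))| ^ p = a ^ (-(p / q)) := by
  rw [abs_of_nonneg (Real.rpow_nonneg ha _), ← Real.rpow_mul ha]
  ring_nf

lemma not_summable_of_eq_one_div {f : ℕ → ℝ} (hf : ∀ k, 1 ≤ k → f k = 1 / k) :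
    ¬ Summable f := by
  have hf' : f =ᶠ[cofinite] fun k : ℕ => 1 / (k : ℝ) := by
    rw [Nat.cofinite_eq_atTop]
    filter_upwards [eventually_ge_atTop 1] using hf
  rw [summable_congr_cofinite hf']
  exact Real.not_summable_one_div_natCast

lemma summable_natCast_rpow_neg_of_tendsto {s : ℕ → ℝ} {L : ℝ} (hs : Tendsto s atTop (𝓝 L))
    (hL : 1 < L) : Summable fun k : ℕ => (k : ℝ) ^ (-s k) := by
  obtain ⟨r, hr1, hrL⟩ := exists_between hL
  refine Summable.of_norm_bounded_eventually_nat (g := fun k : ℕ => (k : ℝ) ^ (-r))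
    (Real.summable_nat_rpow.mpr (by linarith)) ?_
  filter_upwards [hs.eventually_const_lt hrL, eventually_ge_atTop 1] with k hrs hk
  rw [Real.norm_eq_abs, abs_of_nonneg (Real.rpow_nonneg k.cast_nonneg _)]
  exact Real.rpow_le_rpow_of_exponent_le (by exact_mod_cast hk) (by linarith)

theorem stmt_3_general (q : ℕ → ℝ) (hq1 : ∀ k, 1 ≤ k → 1 < q k)
    (hqlim : Tendsto q atTop (𝓝 1))
    (x : ℕ → ℝ) (hxdef : ∀ k : ℕ, 1 ≤ k → x k = (k : ℝ) ^ (-(1 / q k))) :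
    (∀ k : ℕ, 1 ≤ k → |x k| ^ q k = 1 / (k : ℝ)) ∧
    ¬ (Summable fun k => |x k| ^ q k) ∧
    (∀ p : ℝ, 1 < p → Summable fun k => |x k| ^ p) := by
  have hpow (p : ℝ) (k : ℕ) (hk : 1 ≤ k) : |x k| ^ p = (k : ℝ) ^ (-(p / q k)) := by
    rw [hxdef k hk, abs_rpow_neg_one_div_rpow k.cast_nonneg]
  have hterm (k : ℕ) (hk : 1 ≤ k) : |x k| ^ q k = 1 / (k : ℝ) := by
    rw [hpow _ k hk, div_self (by linarith [hq1 k hk]), Real.rpow_neg_one, one_div]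
  refine ⟨hterm, not_summable_of_eq_one_div hterm, fun p hp => ?_⟩
  have hexp : Tendsto (fun k => p / q k) atTop (𝓝 p) := by
    simpa [Pi.div_def] using tendsto_const_nhds.div hqlim one_ne_zero
  have heq : (fun k => |x k| ^ p) =ᶠ[cofinite] fun k : ℕ => (k : ℝ) ^ (-(p / q k)) := by
    rw [Nat.cofinite_eq_atTop]
    filter_upwards [eventually_ge_atTop 1] using hpow p
  exact (summable_congr_cofinite heq).mpr (summable_natCast_rpow_neg_of_tendsto hexp hp)

/-- for `1 < q k ≤ 2` (`k ≥ 1`), `q k → 1`, and the sequence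
`x k = k ^ (−1/q k)` for `k ≥ 1`, the series `∑ |x k| ^ q k` diverges (indeed each
term equals `1/k` for `k ≥ 1`), while `∑ |x k| ^ p` converges for every real `p > 1`.
In particular the inclusion `ℓ^{q_k} ⊆ ⋂_{p>1} ℓ^p` is strict. -/
theorem stmt_3 (q : ℕ → ℝ) (hq1 : ∀ k, 1 ≤ k → 1 < q k) (hq2 : ∀ k, 1 ≤ k → q k ≤ 2)
    (hqlim : Tendsto q atTop (𝓝 1))
    (x : ℕ → ℝ) (hxdef : ∀ k : ℕ, 1 ≤ k → x k = (k : ℝ) ^ (-(1 / q k))) :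
    (∀ k : ℕ, 1 ≤ k → |x k| ^ q k = 1 / (k : ℝ)) ∧
    ¬ (Summable fun k => |x k| ^ q k) ∧
    (∀ p : ℝ, 1 < p → Summable fun k => |x k| ^ p) :=
  stmt_3_general q hq1 hqlim x hxdef
end

section
/- Let {q_k} be a sequence of real numbers with 1 < q_k ≤ 2 for all k and q_k → 1 as k → ∞. Then the F-norm ‖x‖_{q_k} = ∑_k |x_k|^{q_k} is strictly convex on ℓ^{q_k}: for all x, y ∈ ℓ^{q_k} with x ≠ y and every t ∈ (0,1), one has ∑_k |t x_k + (1−t) y_k|^{q_k} < t ∑_k |x_k|^{q_k} + (1−t) ∑_k |y_k|^{q_k}. -/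
/-!
Each map `a ↦ |a| ^ p` with `p > 1` is strictly convex on `ℝ`, so the series defining the
F-norm is dominated termwise by the convex combination of the two series, with strict
inequality at any index where `x` and `y` differ.
-/

open Filter Topology Set

theorem strictConvexOn_abs_rpow {p : ℝ} (hp : 1 < p) :
    StrictConvexOn ℝ univ fun a : ℝ => |a| ^ p := by
  refine ⟨convex_univ, fun a _ b _ hab s t hs ht hst => ?_⟩
  simp only [smul_eq_mul]
  have hp0 : 0 ≤ p := by linarith
  have htriangle : |s * a + t * b| ≤ s * |a| + t * |b| := by
    simpa [abs_mul, abs_of_pos hs, abs_of_pos ht] using abs_add_le (s * a) (t * b)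
  have hconvex := (strictConvexOn_rpow hp).convexOn.2 (abs_nonneg a) (abs_nonneg b)
    hs.le ht.le hst
  simp only [smul_eq_mul] at hconvex
  by_cases habs : |a| = |b|
  · -- `a = -b ≠ 0`, so the triangle inequality is strict
    have hb : b ≠ 0 := by rintro rfl; exact hab (abs_eq_zero.1 (habs.trans abs_zero))
    have ha : a = -b := (abs_eq_abs.1 habs).resolve_left hab
    have hlt : |s * a + t * b| < s * |a| + t * |b| := by
      rw [ha, abs_neg, ← add_mul, hst, one_mul, show s * -b + t * b = (t - s) * b by ring,
        abs_mul]
      have : |t - s| < 1 := abs_lt.2 ⟨by linarith, by linarith⟩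
      exact mul_lt_of_lt_one_left (abs_pos.2 hb) this
    exact (Real.rpow_lt_rpow (abs_nonneg _) hlt (by linarith)).trans_le hconvex
  · have hstrict := (strictConvexOn_rpow hp).2 (abs_nonneg a) (abs_nonneg b) habs hs ht hst
    simp only [smul_eq_mul] at hstrict
    exact (Real.rpow_le_rpow (abs_nonneg _) htriangle hp0).trans_lt hstrict

theorem tsum_lt_of_strictConvexOn {ι : Type*} {φ : ι → ℝ → ℝ}
    (hφ : ∀ k, StrictConvexOn ℝ univ (φ k)) (hφ0 : ∀ k a, 0 ≤ φ k a) {x y : ι → ℝ}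
    (hx : Summable fun k => φ k (x k)) (hy : Summable fun k => φ k (y k)) (hxy : x ≠ y)
    {a b : ℝ} (ha : 0 < a) (hb : 0 < b) (hab : a + b = 1) :
    ∑' k, φ k (a * x k + b * y k) < a * ∑' k, φ k (x k) + b * ∑' k, φ k (y k) := by
  obtain ⟨i, hi⟩ := Function.ne_iff.1 hxy
  have hle : ∀ k, φ k (a * x k + b * y k) ≤ a * φ k (x k) + b * φ k (y k) := fun k =>
    (hφ k).convexOn.2 (mem_univ _) (mem_univ _) ha.le hb.le hab
  have hlt : φ i (a * x i + b * y i) < a * φ i (x i) + b * φ i (y i) :=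
    (hφ i).2 (mem_univ _) (mem_univ _) hi ha hb hab
  have hsum : Summable fun k => a * φ k (x k) + b * φ k (y k) :=
    (hx.mul_left a).add (hy.mul_left b)
  calc ∑' k, φ k (a * x k + b * y k)
      < ∑' k, (a * φ k (x k) + b * φ k (y k)) :=
        Summable.tsum_lt_tsum hle hlt (hsum.of_nonneg_of_le (fun k => hφ0 k _) hle) hsum
    _ = a * ∑' k, φ k (x k) + b * ∑' k, φ k (y k) := by
        rw [(hx.mul_left a).tsum_add (hy.mul_left b), tsum_mul_left, tsum_mul_left]

theorem stmt_5_general (q : ℕ → ℝ) (hq1 : ∀ k, 1 < q k)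
    (x y : ℕ → ℝ) (hx : Summable fun k => |x k| ^ q k)
    (hy : Summable fun k => |y k| ^ q k) (hxy : x ≠ y)
    (t : ℝ) (ht0 : 0 < t) (ht1 : t < 1) :
    ∑' k, |t * x k + (1 - t) * y k| ^ q k <
      t * ∑' k, |x k| ^ q k + (1 - t) * ∑' k, |y k| ^ q k :=
  tsum_lt_of_strictConvexOn (φ := fun k a => |a| ^ q k)
    (fun k => strictConvexOn_abs_rpow (hq1 k)) (fun _ _ => Real.rpow_nonneg (abs_nonneg _) _)
    hx hy hxy ht0 (sub_pos.2 ht1) (add_sub_cancel t 1)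

/-- for `1 < q k ≤ 2`, `q k → 1`, the F-norm `‖x‖_{q_k} = ∑_k |x_k|^{q_k}`
is strictly convex on `ℓ^{q_k}`: for `x ≠ y` in `ℓ^{q_k}` and `t ∈ (0,1)`,
`∑_k |t x_k + (1−t) y_k|^{q_k} < t ∑_k |x_k|^{q_k} + (1−t) ∑_k |y_k|^{q_k}`. -/
theorem stmt_5 (q : ℕ → ℝ) (hq1 : ∀ k, 1 < q k) (hq2 : ∀ k, q k ≤ 2)
    (hqlim : Tendsto q atTop (𝓝 1))
    (x y : ℕ → ℝ) (hx : Summable fun k => |x k| ^ q k)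
    (hy : Summable fun k => |y k| ^ q k) (hxy : x ≠ y)
    (t : ℝ) (ht0 : 0 < t) (ht1 : t < 1) :
    ∑' k, |t * x k + (1 - t) * y k| ^ q k <
      t * ∑' k, |x k| ^ q k + (1 - t) * ∑' k, |y k| ^ q k :=
  stmt_5_general q hq1 x y hx hy hxy t ht0 ht1
end

section
/- Let {q_k} be a sequence of real numbers with 1 < q_k ≤ 2 for all k and q_k → 1 as k → ∞. Then the F-norm ‖·‖_{q_k} is Gâteaux differentiable on ℓ¹ with derivative at x given by the sequence {q_k |x_k|^{q_k−1} sign(x_k)}: for all real sequences x and h with ∑_k |x_k| < ∞ and ∑_k |h_k| < ∞, the difference quotient (‖x + t h‖_{q_k} − ‖x‖_{q_k})/t converges, as the real parameter t → 0 (t ≠ 0), to ∑_k q_k |x_k|^{q_k−1} sign(x_k) h_k. -/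
open Filter Topology

/-! Each term `t ↦ |x k + t * h k| ^ q k` is differentiable with derivative
`q k * |c| ^ (q k - 1) * sign c * h k`, `c = x k + t * h k`. Since `0 < q k - 1 ≤ 1`, for `|t| < 1`
this is bounded by `2 * max 1 M * |h k|` with `M = ∑ (|x k| + |h k|)`, a summable bound uniform
in `t`, so the series may be differentiated termwise at `t = 0`. -/

lemma Real.rpow_le_max_one {a r : ℝ} (ha : 0 ≤ a) (hr0 : 0 ≤ r) (hr1 : r ≤ 1) :
    a ^ r ≤ max 1 a :=
  calc a ^ r ≤ max 1 a ^ r := Real.rpow_le_rpow ha (le_max_right 1 a) hr0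
    _ ≤ max 1 a ^ (1 : ℝ) := Real.rpow_le_rpow_of_exponent_le (le_max_left 1 a) hr1
    _ = max 1 a := Real.rpow_one _

lemma Real.abs_sign_le_one (c : ℝ) : |Real.sign c| ≤ 1 := by
  rcases Real.sign_apply_eq c with hc | hc | hc <;> simp [hc]

lemma Real.abs_rpow_sub_two_mul (c p : ℝ) :
    |c| ^ (p - 2) * c = |c| ^ (p - 1) * Real.sign c := by
  rcases lt_trichotomy c 0 with hc | rfl | hc
  · rw [Real.sign_of_neg hc, abs_of_neg hc, show p - 1 = (p - 2) + 1 by ring,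
      Real.rpow_add_one (neg_ne_zero.mpr hc.ne)]
    ring
  · simp
  · rw [Real.sign_of_pos hc, abs_of_pos hc, show p - 1 = (p - 2) + 1 by ring,
      Real.rpow_add_one hc.ne']
    ring

lemma hasDerivAt_abs_add_mul_rpow {p : ℝ} (hp : 1 < p) (x h t : ℝ) :
    HasDerivAt (fun s => |x + s * h| ^ p)
      (p * |x + t * h| ^ (p - 1) * Real.sign (x + t * h) * h) t := by
  have hline : HasDerivAt (fun s => x + s * h) h t := by
    simpa using ((hasDerivAt_id t).mul_const h).const_add x
  refine ((hasDerivAt_abs_rpow (x + t * h) hp).comp t hline).congr_deriv ?_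
  rw [mul_assoc p, Real.abs_rpow_sub_two_mul]
  ring

lemma abs_mul_rpow_mul_sign_mul_le {p c : ℝ} (hp1 : 1 ≤ p) (hp2 : p ≤ 2) (h : ℝ) :
    |p * |c| ^ (p - 1) * Real.sign c * h| ≤ 2 * max 1 |c| * |h| := by
  have hpow : |c| ^ (p - 1) ≤ max 1 |c| :=
    Real.rpow_le_max_one (abs_nonneg c) (by linarith) (by linarith)
  rw [abs_mul, abs_mul, abs_mul, abs_of_nonneg (by linarith : 0 ≤ p),
    abs_of_nonneg (Real.rpow_nonneg (abs_nonneg c) _)]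
  refine mul_le_mul_of_nonneg_right ?_ (abs_nonneg h)
  calc p * |c| ^ (p - 1) * |Real.sign c| ≤ 2 * max 1 |c| * 1 := by
        gcongr
        exact Real.abs_sign_le_one c
    _ = 2 * max 1 |c| := mul_one _

lemma summable_abs_rpow_of_summable_abs {y q : ℕ → ℝ} (hy : Summable fun k => |y k|)
    (hq : ∀ k, 1 ≤ q k) : Summable fun k => |y k| ^ q k := by
  refine Summable.of_norm_bounded_eventually_nat hy ?_
  filter_upwards [(hy.tendsto_atTop_zero.eventually_le_const one_pos)] with k hk
  rw [Real.norm_eq_abs, abs_of_nonneg (Real.rpow_nonneg (abs_nonneg _) _)]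
  exact Real.rpow_le_self_of_le_one (abs_nonneg _) hk (hq k)

theorem stmt_6_general (q : ℕ → ℝ) (hq1 : ∀ k, 1 < q k) (hq2 : ∀ k, q k ≤ 2)
    (x h : ℕ → ℝ) (hx : Summable fun k => |x k|) (hh : Summable fun k => |h k|) :
    Tendsto
      (fun t : ℝ => ((∑' k, |x k + t * h k| ^ q k) - ∑' k, |x k| ^ q k) / t)
      (𝓝[≠] 0)
      (𝓝 (∑' k, q k * |x k| ^ (q k - 1) * Real.sign (x k) * h k)) := by
  set M := ∑' k, (|x k| + |h k|)
  have hbound : ∀ k, ∀ t ∈ Metric.ball (0 : ℝ) 1, |x k + t * h k| ≤ M := fun k t ht =>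
    calc |x k + t * h k| ≤ |x k| + |t| * |h k| := by
          simpa only [abs_mul] using abs_add_le (x k) (t * h k)
      _ ≤ |x k| + |h k| := by
          gcongr
          exact mul_le_of_le_one_left (abs_nonneg _) (by simpa using (mem_ball_zero_iff.mp ht).le)
      _ ≤ M := (hx.add hh).le_tsum k fun j _ => by positivity
  have hderiv := hasDerivAt_tsum_of_isPreconnected (hh.mul_left (2 * max 1 M))
    Metric.isOpen_ball (convex_ball (0 : ℝ) 1).isPreconnected
    (fun k t _ => hasDerivAt_abs_add_mul_rpow (hq1 k) (x k) (h k) t)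
    (fun k t ht => (abs_mul_rpow_mul_sign_mul_le (hq1 k).le (hq2 k) (h k)).trans <| by
      gcongr
      exact hbound k t ht)
    (Metric.mem_ball_self one_pos)
    (by simpa using summable_abs_rpow_of_summable_abs hx fun k => (hq1 k).le)
    (Metric.mem_ball_self one_pos)
  simpa [div_eq_inv_mul] using hderiv.tendsto_slope_zero

/-- for `1 < q k ≤ 2`, `q k → 1`, the F-norm `‖·‖_{q_k}` is Gâteaux
differentiable on `ℓ¹` with derivative at `x` given by `{q_k |x_k|^{q_k−1} sign(x_k)}`:
for `x, h ∈ ℓ¹`, the difference quotient `(‖x + t h‖_{q_k} − ‖x‖_{q_k})/t` converges, as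
`t → 0` (`t ≠ 0`), to `∑_k q_k |x_k|^{q_k−1} sign(x_k) h_k`. -/
theorem stmt_6 (q : ℕ → ℝ) (hq1 : ∀ k, 1 < q k) (hq2 : ∀ k, q k ≤ 2)
    (hqlim : Tendsto q atTop (𝓝 1))
    (x h : ℕ → ℝ) (hx : Summable fun k => |x k|) (hh : Summable fun k => |h k|) :
    Tendsto
      (fun t : ℝ => ((∑' k, |x k + t * h k| ^ q k) - ∑' k, |x k| ^ q k) / t)
      (𝓝[≠] 0)
      (𝓝 (∑' k, q k * |x k| ^ (q k - 1) * Real.sign (x k) * h k)) :=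
  stmt_6_general q hq1 hq2 x h hx hh
end

section
/- (Nakano–Simons) Let {p_k} be a sequence of real numbers with 0 < p_k ≤ 1 for all k. Then ℓ^{p_k} = ℓ¹ (i.e., for every real sequence x, ∑_k |x_k|^{p_k} < ∞ if and only if ∑_k |x_k| < ∞) if and only if there exists a natural number N > 1 such that ∑_k N^{π_k} < ∞, where π_k = p_k/(p_k − 1) (a negative number) when p_k < 1, and N^{π_k} is interpreted as 0 when p_k = 1 (convention π_k = −∞). -/
/-!
For `0 < p < 1` and `N > 0` one has `t ^ p ≤ N * t + N ^ π` with `π = p / (p - 1)`, so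
`∑ N ^ π_k < ∞` gives `ℓ¹ ⊆ ℓ^{p_k}`, while `ℓ^{p_k} ⊆ ℓ¹` holds for any exponents in `(0, 1]`
because `|x_k| ≤ 1` eventually. Conversely, equality in that Young inequality is attained at
`t = N ^ π / N`, where `t ^ p = N ^ π`. If `∑_k N ^ π_k = ∞` for every `N`, cut `ℕ` into
consecutive blocks whose sums of `(2 ^ (n + 1)) ^ π_k` lie in `[1, 2]` and put
`x_k = N ^ π_k / N` with `N = 2 ^ (n + 1)` on the `n`-th block: each block contributes at least
`1` to `∑ |x_k| ^ p_k` but at most `2 ^ (-n)` to `∑ |x_k|`.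
-/

open Filter Topology Finset

/-- `N ^ π_k` with `π_k = p_k / (p_k - 1)`, read as `0` (`π_k = -∞`) when `p_k = 1`. -/
noncomputable def nakanoWeight {ι : Type*} (p : ι → ℝ) (N : ℝ) (k : ι) : ℝ :=
  if p k = 1 then 0 else N ^ (p k / (p k - 1))

lemma Real.rpow_le_mul_add_rpow_div_sub_one {p N t : ℝ} (hp0 : 0 ≤ p) (hp1 : p < 1) (hN : 0 < N)
    (ht : 0 ≤ t) : t ^ p ≤ N * t + N ^ (p / (p - 1)) := by
  have hNt : 0 ≤ N * t := mul_nonneg hN.le ht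
  have hNπ : 0 ≤ N ^ (p / (p - 1)) := Real.rpow_nonneg hN.le _
  -- split at the point `A = N ^ (1 / (p - 1))` where `t ^ p = N * t`
  set A := N ^ (p - 1)⁻¹
  have hA : 0 < A := Real.rpow_pos_of_pos hN _
  rcases le_total t A with htA | hAt
  · have hAp : A ^ p = N ^ (p / (p - 1)) := by
      rw [← Real.rpow_mul hN.le, inv_mul_eq_div]
    linarith [Real.rpow_le_rpow ht htA hp0]
  · have hAp : A ^ (p - 1) = N := by
      rw [← Real.rpow_mul hN.le, inv_mul_cancel₀ (by linarith), Real.rpow_one]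
    have ht0 : 0 < t := hA.trans_le hAt
    calc t ^ p = t ^ (p - 1) * t := by
          rw [← Real.rpow_add_one ht0.ne', sub_add_cancel]
      _ ≤ N * t := by
          gcongr
          exact hAp ▸ Real.rpow_le_rpow_of_nonpos hA hAt (by linarith)
      _ ≤ N * t + N ^ (p / (p - 1)) := le_add_of_nonneg_right hNπ

section nakanoWeight

variable {ι : Type*} {p : ι → ℝ} {N : ℝ}

lemma nakanoWeight_nonneg (hN : 0 ≤ N) (k : ι) : 0 ≤ nakanoWeight p N k := by
  unfold nakanoWeight
  split_ifs
  exacts [le_rfl, Real.rpow_nonneg hN _]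

lemma nakanoWeight_le_one {k : ι} (hp0 : 0 ≤ p k) (hp1 : p k ≤ 1) (hN : 1 ≤ N) :
    nakanoWeight p N k ≤ 1 := by
  unfold nakanoWeight
  split_ifs with h
  · exact zero_le_one
  · exact Real.rpow_le_one_of_one_le_of_nonpos hN
      (div_nonpos_of_nonneg_of_nonpos hp0 (by linarith))

lemma rpow_le_mul_add_nakanoWeight {k : ι} {t : ℝ} (hp0 : 0 ≤ p k) (hp1 : p k ≤ 1) (hN : 1 ≤ N)
    (ht : 0 ≤ t) : t ^ p k ≤ N * t + nakanoWeight p N k := by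
  unfold nakanoWeight
  split_ifs with h
  · rw [h, Real.rpow_one, add_zero]
    exact le_mul_of_one_le_left ht hN
  · exact Real.rpow_le_mul_add_rpow_div_sub_one hp0 (hp1.lt_of_ne h) (by linarith) ht

lemma div_rpow_nakanoWeight (hN : 0 < N) (k : ι) :
    (nakanoWeight p N k / N) ^ p k = nakanoWeight p N k := by
  unfold nakanoWeight
  split_ifs with h
  · rw [zero_div, h, Real.rpow_one]
  · have hp : p k - 1 ≠ 0 := sub_ne_zero.2 h
    rw [← Real.rpow_sub_one hN.ne', ← Real.rpow_mul hN.le]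
    congr 1
    field_simp
    ring

end nakanoWeight

theorem summable_abs_of_summable_abs_rpow {ι : Type*} {p x : ι → ℝ} (hp0 : ∀ k, 0 < p k)
    (hp1 : ∀ k, p k ≤ 1) (hs : Summable fun k => |x k| ^ p k) : Summable fun k => |x k| := by
  refine hs.of_norm_bounded_eventually ?_
  filter_upwards [hs.tendsto_cofinite_zero.eventually (gt_mem_nhds one_pos)] with k hk
  rw [Real.norm_eq_abs, abs_abs]
  exact Real.self_le_rpow_of_le_one (abs_nonneg _)
    ((Real.rpow_lt_one_iff' (abs_nonneg _) (hp0 k)).1 hk).le (hp1 k)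

theorem summable_abs_rpow_of_summable_abs_s8 {ι : Type*} {p x : ι → ℝ} {N : ℝ} (hp0 : ∀ k, 0 ≤ p k)
    (hp1 : ∀ k, p k ≤ 1) (hN : 1 ≤ N) (hw : Summable (nakanoWeight p N))
    (hx : Summable fun k => |x k|) : Summable fun k => |x k| ^ p k :=
  ((hx.mul_left N).add hw).of_nonneg_of_le (fun _ => Real.rpow_nonneg (abs_nonneg _) _)
    fun k => rpow_le_mul_add_nakanoWeight (hp0 k) (hp1 k) hN (abs_nonneg _)

lemma StrictMono.existsUnique_mem_Ico {α : Type*} [LinearOrder α] [NoMaxOrder α] {g : ℕ → α}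
    (hg : StrictMono g) (htop : Tendsto g atTop atTop) {x : α} (hx : g 0 ≤ x) :
    ∃! n, x ∈ Set.Ico (g n) (g (n + 1)) := by
  have hex : ∃ n, x < g n := (htop.eventually_gt_atTop x).exists
  obtain ⟨n, hn⟩ : ∃ n, Nat.find hex = n + 1 :=
    Nat.exists_eq_succ_of_ne_zero fun h => (Nat.find_spec hex).not_ge (h ▸ hx)
  refine ⟨n, ⟨not_lt.1 (Nat.find_min hex (by omega)), hn ▸ Nat.find_spec hex⟩, ?_⟩
  rintro m ⟨hm, hm'⟩
  have hnx : g n ≤ x := not_lt.1 (Nat.find_min hex (by omega))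
  have hxn : x < g (n + 1) := hn ▸ Nat.find_spec hex
  by_contra hne
  rcases Nat.lt_or_gt_of_ne hne with h | h
  · exact (hm'.trans_le ((hg.monotone h).trans hnx)).false
  · exact (hxn.trans_le ((hg.monotone h).trans hm)).false

theorem summable_iff_summable_sum_Ico {f : ℕ → ℝ} (hf : 0 ≤ f) {g : ℕ → ℕ} (hg : StrictMono g)
    (hg0 : g 0 = 0) : Summable f ↔ Summable fun n => ∑ k ∈ Ico (g n) (g (n + 1)), f k := by
  have hpart (k : ℕ) : ∃! n, k ∈ (Ico (g n) (g (n + 1)) : Set ℕ) := by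
    simpa only [coe_Ico] using hg.existsUnique_mem_Ico hg.tendsto_atTop (hg0.trans_le k.zero_le)
  rw [summable_partition hf hpart, and_iff_right fun _ => Summable.of_finite]
  simp only [Finset.tsum_subtype']

lemma exists_lt_one_le_sum_Ico_le_two {a : ℕ → ℝ} (ha0 : ∀ k, 0 ≤ a k) (ha1 : ∀ k, a k ≤ 1)
    (hns : ¬Summable a) (m : ℕ) :
    ∃ j, m < j ∧ 1 ≤ ∑ k ∈ Ico m j, a k ∧ ∑ k ∈ Ico m j, a k ≤ 2 := by
  have hex : ∃ j, 1 ≤ ∑ k ∈ Ico m j, a k := by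
    have htop := (not_summable_iff_tendsto_nat_atTop_of_nonneg ha0).1 hns
    obtain ⟨j, hj, hmj⟩ :=
      ((htop.eventually_ge_atTop (∑ k ∈ range m, a k + 1)).and (eventually_ge_atTop m)).exists
    exact ⟨j, by rw [sum_Ico_eq_sub _ hmj]; linarith⟩
  -- the first `j` at which the block sum reaches `1` overshoots by at most one term `a k ≤ 1`
  set j := Nat.find hex
  have hmj : m < j := by
    by_contra! h
    have := Nat.find_spec hex
    rw [Ico_eq_empty_of_le h, sum_empty] at this
    linarith
  have hbefore : ∑ k ∈ Ico m (j - 1), a k < 1 := not_le.1 (Nat.find_min hex (by omega))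
  refine ⟨j, hmj, Nat.find_spec hex, ?_⟩
  obtain ⟨i, hi⟩ : ∃ i, j = i + 1 := Nat.exists_eq_succ_of_ne_zero (by omega)
  rw [hi, sum_Ico_succ_top (by omega)]
  rw [hi, Nat.add_sub_cancel] at hbefore
  linarith [ha1 i]

lemma exists_blocks_one_le_sum_Ico_le_two {a : ℕ → ℕ → ℝ} (ha0 : ∀ n k, 0 ≤ a n k)
    (ha1 : ∀ n k, a n k ≤ 1) (hns : ∀ n, ¬Summable (a n)) :
    ∃ g : ℕ → ℕ, StrictMono g ∧ g 0 = 0 ∧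
      ∀ n, 1 ≤ ∑ k ∈ Ico (g n) (g (n + 1)), a n k ∧ ∑ k ∈ Ico (g n) (g (n + 1)), a n k ≤ 2 := by
  choose next hnext using fun n => exists_lt_one_le_sum_Ico_le_two (ha0 n) (ha1 n) (hns n)
  let g (n : ℕ) : ℕ := Nat.rec 0 next n
  exact ⟨g, strictMono_nat_of_lt_succ fun n => (hnext n (g n)).1, rfl,
    fun n => (hnext n (g n)).2⟩

theorem exists_summable_abs_not_summable_abs_rpow {p : ℕ → ℝ} (hp0 : ∀ k, 0 ≤ p k)
    (hp1 : ∀ k, p k ≤ 1) (hns : ∀ N : ℕ, 1 < N → ¬Summable (nakanoWeight p N)) :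
    ∃ x : ℕ → ℝ, (Summable fun k => |x k|) ∧ ¬Summable fun k => |x k| ^ p k := by
  set a : ℕ → ℕ → ℝ := fun n => nakanoWeight p (2 ^ (n + 1))
  have hpow (n : ℕ) : (1 : ℝ) ≤ 2 ^ (n + 1) := one_le_pow₀ one_le_two
  obtain ⟨g, hg, hg0, hblock⟩ := exists_blocks_one_le_sum_Ico_le_two (a := a)
    (fun n => nakanoWeight_nonneg (zero_le_one.trans (hpow n)))
    (fun n k => nakanoWeight_le_one (hp0 k) (hp1 k) (hpow n))
    (fun n => by simpa [a] using hns (2 ^ (n + 1)) (Nat.one_lt_two_pow n.succ_ne_zero))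
  have hpart (k : ℕ) := hg.existsUnique_mem_Ico hg.tendsto_atTop (hg0.trans_le k.zero_le)
  choose blk hblk using fun k => (hpart k).exists
  set x : ℕ → ℝ := fun k => a (blk k) k / 2 ^ (blk k + 1)
  have hx (n k : ℕ) (hk : k ∈ Ico (g n) (g (n + 1))) :
      |x k| = a n k / 2 ^ (n + 1) ∧ |x k| ^ p k = a n k := by
    obtain rfl : blk k = n := (hpart k).unique (hblk k) (by simpa using hk)
    rw [abs_of_nonneg (div_nonneg (nakanoWeight_nonneg (by positivity) k) (by positivity))]
    exact ⟨rfl, div_rpow_nakanoWeight (by positivity) k⟩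
  refine ⟨x, ?_, ?_⟩
  · rw [summable_iff_summable_sum_Ico (fun k => abs_nonneg (x k)) hg hg0]
    refine summable_geometric_two.of_nonneg_of_le (fun n => sum_nonneg fun k _ => abs_nonneg _)
      fun n => ?_
    calc ∑ k ∈ Ico (g n) (g (n + 1)), |x k|
      _ = (∑ k ∈ Ico (g n) (g (n + 1)), a n k) / 2 ^ (n + 1) := by
          rw [sum_div]
          exact sum_congr rfl fun k hk => (hx n k hk).1
      _ ≤ 2 / 2 ^ (n + 1) := by gcongr; exact (hblock n).2
      _ = (1 / 2) ^ n := by rw [pow_succ, one_div_pow]; field_simp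
  · rw [summable_iff_summable_sum_Ico (fun k => by positivity) hg hg0]
    intro hs
    have hblock_ge : ∀ n, 1 ≤ ∑ k ∈ Ico (g n) (g (n + 1)), |x k| ^ p k := fun n => by
      rw [sum_congr rfl fun k hk => (hx n k hk).2]
      exact (hblock n).1
    linarith [ge_of_tendsto' hs.tendsto_atTop_zero hblock_ge]

/-- Nakano–Simons: for exponents `0 < p k ≤ 1`, one has `ℓ^{p_k} = ℓ¹`
(i.e. for every real sequence `x`, `∑_k |x_k|^{p_k} < ∞ ↔ ∑_k |x_k| < ∞`) if and only if
there is a natural number `N > 1` with `∑_k N^{π_k} < ∞`, where `π_k = p_k/(p_k − 1)`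
when `p_k < 1` and `N^{π_k}` is interpreted as `0` when `p_k = 1`. -/
theorem stmt_8 (p : ℕ → ℝ) (hp0 : ∀ k, 0 < p k) (hp1 : ∀ k, p k ≤ 1) :
    (∀ x : ℕ → ℝ, (Summable fun k => |x k| ^ p k) ↔ Summable fun k => |x k|) ↔
    (∃ N : ℕ, 1 < N ∧
      Summable fun k => if p k = 1 then (0 : ℝ) else (N : ℝ) ^ (p k / (p k - 1))) := by
  constructor
  · intro hiff
    by_contra! hns
    obtain ⟨x, hx, hxp⟩ := exists_summable_abs_not_summable_abs_rpow (fun k => (hp0 k).le) hp1 hns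
    exact hxp ((hiff x).2 hx)
  · rintro ⟨N, hN, hw⟩ x
    exact ⟨summable_abs_of_summable_abs_rpow hp0 hp1,
      summable_abs_rpow_of_summable_abs_s8 (fun k => (hp0 k).le) hp1 (mod_cast hN.le) hw⟩
end

section
/- For the exponents q_k = 1 + 1/k (k ≥ 1), one has ℓ^{q_k} = ℓ¹: for every real sequence x = {x_k} (k ≥ 1), the series ∑_k |x_k|^{1 + 1/k} converges if and only if the series ∑_k |x_k| converges. -/
/-!
Near zero `|x_k|^{1+1/k} ≤ |x_k|`, which gives `ℓ¹ ⊆ ℓ^{q_k}`. Conversely, either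
`|x_k| ≤ 2⁻ᵏ`, or `|x_k|^{1/k} > 1/2` and hence `|x_k| < 2 |x_k|^{1+1/k}`; so `|x_k|` is dominated
by the summable sequence `2⁻ᵏ + 2 |x_k|^{1+1/k}`.
-/

open Filter Topology

namespace Real

lemma le_pow_add_rpow_one_add_inv_div {a r : ℝ} (ha : 0 ≤ a) (hr : 0 < r) (hr1 : r ≤ 1) (k : ℕ) :
    a ≤ r ^ k + a ^ ((1 : ℝ) + 1 / (k : ℝ)) / r := by
  rcases le_or_gt a (r ^ k) with hsmall | hlarge
  · have : 0 ≤ a ^ ((1 : ℝ) + 1 / (k : ℝ)) / r := by positivity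
    linarith
  rcases Nat.eq_zero_or_pos k with rfl | hk
  · simp only [pow_zero, CharP.cast_eq_zero, div_zero, add_zero, rpow_one]
    linarith [le_div_self ha hr hr1]
  have ha0 : 0 < a := (pow_pos hr k).trans hlarge
  have hroot : r ≤ a ^ ((1 : ℝ) / k) := by
    calc r = (r ^ k) ^ ((1 : ℝ) / k) := by
          rw [← rpow_natCast, ← rpow_mul hr.le, mul_one_div_cancel (by positivity), rpow_one]
      _ ≤ a ^ ((1 : ℝ) / k) := rpow_le_rpow (by positivity) hlarge.le (by positivity)
  have hprod : r * a ≤ a ^ ((1 : ℝ) + 1 / (k : ℝ)) := by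
    rw [rpow_add ha0, rpow_one, mul_comm r]
    exact mul_le_mul_of_nonneg_left hroot ha
  have : a ≤ a ^ ((1 : ℝ) + 1 / (k : ℝ)) / r := by
    rw [le_div_iff₀ hr, mul_comm]
    exact hprod
  linarith [pow_pos hr k]

end Real

lemma summable_of_summable_rpow_one_add_inv {a : ℕ → ℝ} (ha : ∀ k, 0 ≤ a k)
    (h : Summable fun k : ℕ => a k ^ ((1 : ℝ) + 1 / (k : ℝ))) : Summable a := by
  have hdom : Summable fun k : ℕ => (1 / 2 : ℝ) ^ k + a k ^ ((1 : ℝ) + 1 / (k : ℝ)) / (1 / 2) :=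
    (summable_geometric_of_lt_one (by norm_num) (by norm_num)).add (h.div_const _)
  exact hdom.of_nonneg_of_le ha fun k =>
    Real.le_pow_add_rpow_one_add_inv_div (ha k) (by norm_num) (by norm_num) k

lemma Summable.rpow_one_add {ι : Type*} {a p : ι → ℝ} (ha : ∀ i, 0 ≤ a i) (hp : ∀ i, 0 ≤ p i)
    (h : Summable a) : Summable fun i => a i ^ (1 + p i) := by
  have hle_one : ∀ᶠ i in cofinite, a i ≤ 1 :=
    h.tendsto_cofinite_zero.eventually (eventually_le_nhds one_pos)
  refine h.of_norm_bounded_eventually ?_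
  filter_upwards [hle_one] with i hi
  rw [Real.norm_of_nonneg (Real.rpow_nonneg (ha i) _)]
  exact Real.rpow_le_self_of_le_one (ha i) hi (le_add_of_nonneg_right (hp i))

/-- for the exponents `q_k = 1 + 1/k` (`k ≥ 1`), `ℓ^{q_k} = ℓ¹`:
`∑_k |x_k|^{1+1/k}` converges iff `∑_k |x_k|` converges.
(For `k = 0`, the Lean convention `1/0 = 0` makes the exponent `1`, so the `k = 0` term
is `|x 0|` on both sides and the statement faithfully encodes the claim for `k ≥ 1`.) -/
theorem stmt_10 (x : ℕ → ℝ) :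
    (Summable fun k : ℕ => |x k| ^ ((1 : ℝ) + 1 / (k : ℝ))) ↔
      Summable fun k : ℕ => |x k| :=
  ⟨summable_of_summable_rpow_one_add_inv fun k => abs_nonneg (x k),
    Summable.rpow_one_add (fun k => abs_nonneg (x k)) fun k => by positivity⟩
end

section
/- For the exponents q_k = 1 + 1/log(k) (k ≥ 2, natural logarithm), one has ℓ^{q_k} = ℓ¹: for every real sequence x = {x_k} (k ≥ 2), the series ∑_k |x_k|^{1 + 1/log(k)} converges if and only if the series ∑_k |x_k| converges. -/
/-!
Since `|x_k| → 0` when `x ∈ ℓ¹` and every `q_k ≥ 1`, eventually `|x_k|^{q_k} ≤ |x_k|`.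
Conversely, splitting according to whether `|x_k| ≤ ε_k` gives `|x_k| ≤ ε_k + ε_k^{-p_k} |x_k|^{1+p_k}`;
with `ε_k = k⁻²` and `p_k = 1/log k` the factor `ε_k^{-p_k} = k^{2/log k}` is the constant `e²`.
-/

open Filter Topology

theorem Summable.rpow_of_one_le {ι : Type*} {a q : ι → ℝ} (ha : Summable a)
    (ha₀ : ∀ i, 0 ≤ a i) (hq : ∀ i, 1 ≤ q i) : Summable fun i => a i ^ q i := by
  refine ha.of_norm_bounded_eventually ?_
  filter_upwards [ha.tendsto_cofinite_zero.eventually (eventually_le_nhds one_pos)] with i hi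
  rw [Real.norm_of_nonneg (Real.rpow_nonneg (ha₀ i) _)]
  exact Real.rpow_le_self_of_le_one (ha₀ i) hi (hq i)

theorem Real.le_add_rpow_neg_mul_rpow_one_add {a ε p : ℝ} (ha : 0 ≤ a) (hε : 0 < ε)
    (hp : 0 ≤ p) : a ≤ ε + ε ^ (-p) * a ^ (1 + p) := by
  rcases le_or_gt a ε with hle | hlt
  · have : 0 ≤ ε ^ (-p) * a ^ (1 + p) := by positivity
    linarith
  · have ha' : 0 < a := hε.trans hlt
    have hfactor : 1 ≤ ε ^ (-p) * a ^ p := by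
      calc (1 : ℝ) = ε ^ (-p) * ε ^ p := by rw [← Real.rpow_add hε, neg_add_cancel, Real.rpow_zero]
        _ ≤ ε ^ (-p) * a ^ p := by gcongr
    calc a ≤ a * (ε ^ (-p) * a ^ p) := le_mul_of_one_le_right ha'.le hfactor
      _ = ε ^ (-p) * a ^ (1 + p) := by rw [Real.rpow_add ha', Real.rpow_one]; ring
      _ ≤ ε + ε ^ (-p) * a ^ (1 + p) := le_add_of_nonneg_left hε.le

theorem Summable.of_rpow_one_add {ι : Type*} {a ε p : ι → ℝ} {C : ℝ}
    (h : Summable fun i => a i ^ (1 + p i)) (hε : Summable ε) (ha : ∀ i, 0 ≤ a i)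
    (hp : ∀ i, 0 ≤ p i) (hεp : ∀ᶠ i in cofinite, 0 < ε i ∧ ε i ^ (-p i) ≤ C) :
    Summable a := by
  refine (hε.add (h.mul_left C)).of_norm_bounded_eventually ?_
  filter_upwards [hεp] with i ⟨hεi, hCi⟩
  rw [Real.norm_of_nonneg (ha i)]
  calc a i ≤ ε i + ε i ^ (-p i) * a i ^ (1 + p i) :=
        Real.le_add_rpow_neg_mul_rpow_one_add (ha i) hεi (hp i)
    _ ≤ ε i + C * a i ^ (1 + p i) := by
        gcongr
        exact Real.rpow_nonneg (ha i) _

theorem Real.rpow_neg_two_rpow_neg_one_div_log {x : ℝ} (hx : 1 < x) :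
    (x ^ (-2 : ℝ)) ^ (-(1 / Real.log x)) = Real.exp 2 := by
  have hlog : Real.log x ≠ 0 := (Real.log_pos hx).ne'
  rw [← Real.rpow_mul (by positivity), Real.rpow_def_of_pos (by positivity)]
  congr 1
  field_simp

/-- for the exponents `q_k = 1 + 1/log k` (`k ≥ 2`, natural logarithm),
`ℓ^{q_k} = ℓ¹`: `∑_k |x_k|^{1+1/log k}` converges iff `∑_k |x_k|` converges.
(For `k = 0, 1` we have `log k = 0`, and the Lean convention `1/0 = 0` makes the exponent
`1`, so those terms are `|x k|` on both sides and the statement faithfully encodes the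
claim for `k ≥ 2`.) -/
theorem stmt_11 (x : ℕ → ℝ) :
    (Summable fun k : ℕ => |x k| ^ ((1 : ℝ) + 1 / Real.log (k : ℝ))) ↔
      Summable fun k : ℕ => |x k| := by
  have hp : ∀ k : ℕ, 0 ≤ 1 / Real.log (k : ℝ) :=
    fun k => one_div_nonneg.2 (Real.log_natCast_nonneg k)
  refine ⟨fun h => ?_, fun h => h.rpow_of_one_le (fun _ => abs_nonneg _)
    fun k => le_add_of_nonneg_right (hp k)⟩
  refine h.of_rpow_one_add (Real.summable_nat_rpow.2 (by norm_num : (-2 : ℝ) < -1))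
    (fun _ => abs_nonneg _) hp (C := Real.exp 2) ?_
  rw [Nat.cofinite_eq_atTop]
  filter_upwards [eventually_ge_atTop 2] with k hk
  have hk' : (1 : ℝ) < k := by exact_mod_cast hk
  exact ⟨by positivity, (Real.rpow_neg_two_rpow_neg_one_div_log hk').le⟩
end

section
/- Let 0 < α < 1 and consider the exponents q_k = 1 + 1/(log k)^α (k ≥ 2, natural logarithm). Then ℓ^{q_k} ≠ ℓ¹; more precisely, there exists a real sequence x = {x_k} (k ≥ 2) such that the series ∑_k |x_k|^{1 + 1/(log k)^α} converges but the series ∑_k |x_k| diverges. -/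
/-! The witness is `x_k = 1/k`. For `k ≥ 2` one has
`(1/k)^(1 + (log k)^(-α)) = k⁻¹ · exp (-(log k)^(1-α))`, and since `1 - α > 0` Cauchy condensation
turns this series into `∑ exp (-(log 2)^(1-α) · n^(1-α))`, which converges by the integral test. -/

open Filter Real Set MeasureTheory

lemma summable_exp_neg_mul_rpow {b p : ℝ} (hb : 0 < b) (hp : 0 < p) :
    Summable fun n : ℕ => exp (-b * (n : ℝ) ^ p) := by
  have hint : IntegrableOn (fun x : ℝ => exp (-b * x ^ p)) (Ioi 0) := by
    simpa using integrableOn_rpow_mul_exp_neg_mul_rpow (s := 0) (by norm_num) hp hb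
  refine AntitoneOn.summable_of_integrableOn_Ioi_zero (fun x hx y _ hxy => ?_) hint
    fun _ _ => (exp_pos _).le
  exact exp_le_exp.mpr <| mul_le_mul_of_nonpos_left (rpow_le_rpow hx hxy hp.le) (by linarith)

lemma summable_inv_mul_exp_neg_log_rpow {s : ℝ} (hs : 0 < s) :
    Summable fun n : ℕ => (n : ℝ)⁻¹ * exp (-log n ^ s) := by
  have hanti : ∀ ⦃m n : ℕ⦄, 0 < m → m ≤ n →
      (n : ℝ)⁻¹ * exp (-log n ^ s) ≤ (m : ℝ)⁻¹ * exp (-log m ^ s) := by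
    intro m n hm hmn
    have hm' : (0 : ℝ) < m := by exact_mod_cast hm
    have hmn' : (m : ℝ) ≤ n := by exact_mod_cast hmn
    have hlog : log m ^ s ≤ log n ^ s :=
      rpow_le_rpow (log_natCast_nonneg m) (log_le_log hm' hmn') hs.le
    gcongr
  rw [← summable_condensed_iff_of_nonneg (fun n => by positivity) hanti]
  refine (summable_exp_neg_mul_rpow (rpow_pos_of_pos (log_pos one_lt_two) s) hs).congr
    fun k => ?_
  push_cast
  rw [log_pow, mul_inv_cancel_left₀ (by positivity), mul_comm (k : ℝ),
    mul_rpow (log_pos one_lt_two).le k.cast_nonneg, neg_mul]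

lemma inv_rpow_one_add_inv_log_rpow {x : ℝ} (hx : 1 < x) (α : ℝ) :
    x⁻¹ ^ (1 + 1 / log x ^ α) = x⁻¹ * exp (-log x ^ (1 - α)) := by
  have hx0 : 0 < x := by linarith
  have hlog : 0 < log x := log_pos hx
  rw [rpow_add (inv_pos.mpr hx0), rpow_one, rpow_def_of_pos (inv_pos.mpr hx0), log_inv,
    rpow_sub hlog, rpow_one]
  congr 2
  field_simp

theorem stmt_12_general (α : ℝ) (hα1 : α < 1) :
    ∃ x : ℕ → ℝ,
      (Summable fun k : ℕ => |x k| ^ ((1 : ℝ) + 1 / (Real.log (k : ℝ)) ^ α)) ∧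
      ¬ Summable fun k : ℕ => |x k| := by
  refine ⟨fun k => 1 / (k : ℝ), ?_, ?_⟩
  · refine (summable_inv_mul_exp_neg_log_rpow (sub_pos.mpr hα1)).congr_atTop ?_
    filter_upwards [eventually_ge_atTop 2] with k hk
    have hk1 : (1 : ℝ) < k := by exact_mod_cast hk
    rw [abs_of_pos (by positivity), one_div, inv_rpow_one_add_inv_log_rpow hk1]
  · simpa only [abs_of_nonneg (one_div_nonneg.mpr (Nat.cast_nonneg _) : (0 : ℝ) ≤ 1 / _)]
      using not_summable_one_div_natCast

/-- for `0 < α < 1` and the exponents `q_k = 1 + 1/(log k)^α` (`k ≥ 2`),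
`ℓ^{q_k} ≠ ℓ¹`: there is a real sequence `x` such that `∑_k |x_k|^{1 + 1/(log k)^α}`
converges while `∑_k |x_k|` diverges. -/
theorem stmt_12 (α : ℝ) (hα0 : 0 < α) (hα1 : α < 1) :
    ∃ x : ℕ → ℝ,
      (Summable fun k : ℕ => |x k| ^ ((1 : ℝ) + 1 / (Real.log (k : ℝ)) ^ α)) ∧
      ¬ Summable fun k : ℕ => |x k| :=
  stmt_12_general α hα1
end

section
/- Let {p_k} be a sequence of real numbers with 0 < p_k ≤ 1 for all k and p_k → 0 as k → ∞. Then ℓ^{p_k} ⊆ ⋂_{p>0} ℓ^p: for every real sequence x = {x_k}, if ∑_k |x_k|^{p_k} < ∞ then for every real p > 0 the series ∑_k |x_k|^p converges. Moreover, the inclusion is strict: there exists a real sequence x with ∑_k |x_k|^p < ∞ for every p > 0 but ∑_k |x_k|^{p_k} = ∞. -/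
/-!
Eventually `|x k| ^ p k < 1`, which forces `|x k| ≤ 1`, and eventually `p k ≤ r`; for such
terms `|x k| ^ r ≤ |x k| ^ p k`, so comparison gives the inclusion.

For strictness, pick indices `φ j` with `p (φ j) ≤ 1 / j` and put `x (φ j) = 2 ^ (-1 / p (φ j))`,
`x = 0` elsewhere. Then `|x (φ j)| ^ p (φ j) = 1 / 2` for every `j`, while
`|x (φ j)| ^ r ≤ 2 ^ (-r j)` is summable for each `r > 0`.
-/

open Filter Topology Function

section

variable {ι κ : Type*}

lemma Summable.rpow_of_eventually_exponent_le {a q : ι → ℝ} {r : ℝ} (ha : ∀ i, 0 ≤ a i)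
    (hq : ∀ i, 0 ≤ q i) (hsum : Summable fun i => a i ^ q i)
    (hqr : ∀ᶠ i in cofinite, q i ≤ r) : Summable fun i => a i ^ r := by
  have hsmall : ∀ᶠ i in cofinite, a i ^ q i < 1 :=
    hsum.tendsto_cofinite_zero.eventually_lt_const one_pos
  refine hsum.of_norm_bounded_eventually ?_
  filter_upwards [hsmall, hqr] with i hlt hle
  have hai : a i ≤ 1 := by
    by_contra! h
    exact (Real.one_le_rpow h.le (hq i)).not_gt hlt
  rw [Real.norm_of_nonneg (Real.rpow_nonneg (ha i) r)]
  exact Real.rpow_le_rpow_of_exponent_ge' (ha i) hai (hq i) hle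

lemma summable_abs_rpow_extend_zero_iff {φ : ι → κ} (hφ : Injective φ) (g : ι → ℝ) {r : ℝ}
    (hr : r ≠ 0) :
    (Summable fun k => |extend φ g 0 k| ^ r) ↔ Summable fun i => |g i| ^ r := by
  have hcomm : (fun k => |extend φ g 0 k| ^ r) = extend φ (fun i => |g i| ^ r) 0 := by
    ext k
    rw [apply_extend (fun t => |t| ^ r)]
    simp only [comp_def, Pi.zero_apply, abs_zero, Real.zero_rpow hr]
    rfl
  rw [hcomm, summable_extend_zero hφ]

end

lemma abs_two_rpow_neg_inv_rpow_self {s : ℝ} (hs : s ≠ 0) : |(2 : ℝ) ^ (-s⁻¹)| ^ s = 1 / 2 := by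
  rw [abs_of_pos (by positivity), ← Real.rpow_mul zero_le_two, neg_mul, inv_mul_cancel₀ hs,
    Real.rpow_neg_one, one_div]

lemma summable_abs_two_rpow_neg_inv_rpow {s : ℕ → ℝ} (hs : ∀ j : ℕ, (j : ℝ) ≤ (s j)⁻¹) {r : ℝ}
    (hr : 0 < r) : Summable fun j => |(2 : ℝ) ^ (-(s j)⁻¹)| ^ r := by
  refine (summable_geometric_of_lt_one (by positivity)
    (Real.rpow_lt_one_of_one_lt_of_neg one_lt_two (neg_lt_zero.2 hr))).of_nonneg_of_le
    (fun j => by positivity) fun j => ?_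
  rw [abs_of_pos (by positivity), ← Real.rpow_mul zero_le_two, ← Real.rpow_natCast,
    ← Real.rpow_mul zero_le_two]
  apply Real.rpow_le_rpow_of_exponent_le one_le_two
  nlinarith [hs j]

theorem stmt_16_general (p : ℕ → ℝ) (hp0 : ∀ k, 0 < p k)
    (hplim : Tendsto p atTop (𝓝 0)) :
    (∀ x : ℕ → ℝ, (Summable fun k => |x k| ^ p k) →
      ∀ r : ℝ, 0 < r → Summable fun k => |x k| ^ r) ∧
    (∃ x : ℕ → ℝ, (∀ r : ℝ, 0 < r → Summable fun k => |x k| ^ r) ∧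
      ¬ Summable fun k => |x k| ^ p k) := by
  refine ⟨fun x hx r hr => ?_, ?_⟩
  · refine hx.rpow_of_eventually_exponent_le (fun k => abs_nonneg _) (fun k => (hp0 k).le) ?_
    rw [Nat.cofinite_eq_atTop]
    exact hplim.eventually_le_const hr
  · have hinv : Tendsto (fun k => (p k)⁻¹) atTop atTop :=
      tendsto_inv_nhdsGT_zero.comp
        (tendsto_nhdsWithin_iff.2 ⟨hplim, Eventually.of_forall hp0⟩)
    obtain ⟨φ, hφ, hφp⟩ :=
      extraction_forall_of_eventually fun j : ℕ => hinv.eventually_ge_atTop (j : ℝ)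
    refine ⟨extend φ (fun j => (2 : ℝ) ^ (-(p (φ j))⁻¹)) 0, fun r hr => ?_, fun hx => ?_⟩
    · rw [summable_abs_rpow_extend_zero_iff hφ.injective _ hr.ne']
      exact summable_abs_two_rpow_neg_inv_rpow hφp hr
    · have hsub := hx.comp_injective hφ.injective
      simp only [comp_def, hφ.injective.extend_apply, abs_two_rpow_neg_inv_rpow_self (hp0 _).ne',
        summable_const_iff] at hsub
      norm_num at hsub

/-- for exponents `0 < p_k ≤ 1` with `p_k → 0`, one has
`ℓ^{p_k} ⊆ ⋂_{p>0} ℓ^p`, and the inclusion is strict: there is a sequence lying in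
every `ℓ^p` (`p > 0`) but not in `ℓ^{p_k}`. -/
theorem stmt_16 (p : ℕ → ℝ) (hp0 : ∀ k, 0 < p k) (hp1 : ∀ k, p k ≤ 1)
    (hplim : Tendsto p atTop (𝓝 0)) :
    (∀ x : ℕ → ℝ, (Summable fun k => |x k| ^ p k) →
      ∀ r : ℝ, 0 < r → Summable fun k => |x k| ^ r) ∧
    (∃ x : ℕ → ℝ, (∀ r : ℝ, 0 < r → Summable fun k => |x k| ^ r) ∧
      ¬ Summable fun k => |x k| ^ p k) :=
  stmt_16_general p hp0 hplim
end

section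
/- Let {p_k} be a sequence of real numbers with 0 < p_k ≤ 1 for all k and p := inf_k p_k > 0, and let M > 0. If x = {x_k} is a real sequence with ∑_k |x_k|^{p_k} ≤ M (the series converging), then the series ∑_k |x_k| converges and ∑_k |x_k| ≤ max{1, M^{1/p}}. -/
/-!
With `a = ∑ |x_k|^{p_k}`, `q = inf_k p_k` and `c = max 1 (a^{1/q})` we have `|x_k|^{p_k} ≤ a ≤ c^q`,
so `|x_k| ≤ c`, and `t ≤ t^{p_k}` on `[0, 1]` applied to `|x_k| / c` gives
`|x_k| ≤ c^{1-q} |x_k|^{p_k}`. Summing, `∑ |x_k| ≤ c^{1-q} a ≤ c`.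
-/

theorem le_rpow_sub_mul_rpow {t c q r : ℝ} (ht : 0 ≤ t) (hc : 1 ≤ c) (hq : 0 < q)
    (hqr : q ≤ r) (hr : r ≤ 1) (h : t ^ r ≤ c ^ q) : t ≤ c ^ (1 - q) * t ^ r := by
  have hc0 : 0 < c := one_pos.trans_le hc
  have htc : t / c ≤ 1 := (div_le_one hc0).2 <|
    (Real.rpow_le_rpow_iff ht hc0.le (hq.trans_le hqr)).1
      (h.trans (Real.rpow_le_rpow_of_exponent_le hc hqr))
  calc t = c * (t / c) := by field_simp
    _ ≤ c * (t / c) ^ r := by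
        gcongr; exact Real.self_le_rpow_of_le_one (by positivity) htc hr
    _ = c * t ^ r / c ^ r := by rw [Real.div_rpow ht hc0.le]; ring
    _ ≤ c * t ^ r / c ^ q := by gcongr
    _ = c ^ (1 - q) * t ^ r := by rw [Real.rpow_sub hc0, Real.rpow_one]; ring

theorem summable_and_tsum_le_max_one_rpow {ι : Type*} {f p : ι → ℝ} {q : ℝ}
    (hf : ∀ i, 0 ≤ f i) (hq : 0 < q) (hqp : ∀ i, q ≤ p i) (hp1 : ∀ i, p i ≤ 1)
    (hs : Summable fun i => f i ^ p i) :
    Summable f ∧ ∑' i, f i ≤ max 1 ((∑' i, f i ^ p i) ^ (1 / q)) := by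
  set a := ∑' i, f i ^ p i
  set c := max 1 (a ^ (1 / q))
  have ha : 0 ≤ a := tsum_nonneg fun i => Real.rpow_nonneg (hf i) _
  have hac : a ≤ c ^ q :=
    calc a = (a ^ (1 / q)) ^ q := by
          rw [← Real.rpow_mul ha, one_div_mul_cancel hq.ne', Real.rpow_one]
      _ ≤ c ^ q := by gcongr; exact le_max_right _ _
  have hbound : ∀ i, f i ≤ c ^ (1 - q) * f i ^ p i := fun i =>
    le_rpow_sub_mul_rpow (hf i) (le_max_left _ _) hq (hqp i) (hp1 i)
      ((hs.le_tsum i fun j _ => Real.rpow_nonneg (hf j) _).trans hac)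
  have hsf : Summable f := (hs.mul_left _).of_nonneg_of_le hf hbound
  refine ⟨hsf, ?_⟩
  calc ∑' i, f i ≤ ∑' i, c ^ (1 - q) * f i ^ p i := hsf.tsum_le_tsum hbound (hs.mul_left _)
    _ = c ^ (1 - q) * a := tsum_mul_left
    _ ≤ c ^ (1 - q) * c ^ q := by gcongr
    _ = c := by rw [← Real.rpow_add (by positivity), sub_add_cancel, Real.rpow_one]

theorem stmt_17_general (p : ℕ → ℝ) (hp0 : ∀ k, 0 < p k) (hp1 : ∀ k, p k ≤ 1)
    (hinf : 0 < ⨅ k, p k) (M : ℝ)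
    (x : ℕ → ℝ) (hx : Summable fun k => |x k| ^ p k)
    (hxM : (∑' k, |x k| ^ p k) ≤ M) :
    (Summable fun k => |x k|) ∧
      (∑' k, |x k|) ≤ max 1 (M ^ (1 / ⨅ k, p k)) := by
  have hbdd : BddBelow (Set.range p) := ⟨0, by rintro _ ⟨k, rfl⟩; exact (hp0 k).le⟩
  obtain ⟨hsum, hle⟩ := summable_and_tsum_le_max_one_rpow (fun k => abs_nonneg (x k)) hinf
    (ciInf_le hbdd) hp1 hx
  refine ⟨hsum, hle.trans (max_le_max le_rfl ?_)⟩
  exact Real.rpow_le_rpow (tsum_nonneg fun k => by positivity) hxM (by positivity)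

/-- for exponents `0 < p_k ≤ 1` with `p := inf_k p_k > 0` and `M > 0`,
if `∑_k |x_k|^{p_k} ≤ M` (the series converging), then `∑_k |x_k|` converges and
`∑_k |x_k| ≤ max {1, M^{1/p}}`. -/
theorem stmt_17 (p : ℕ → ℝ) (hp0 : ∀ k, 0 < p k) (hp1 : ∀ k, p k ≤ 1)
    (hinf : 0 < ⨅ k, p k) (M : ℝ) (hM : 0 < M)
    (x : ℕ → ℝ) (hx : Summable fun k => |x k| ^ p k)
    (hxM : (∑' k, |x k| ^ p k) ≤ M) :
    (Summable fun k => |x k|) ∧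
      (∑' k, |x k|) ≤ max 1 (M ^ (1 / ⨅ k, p k)) :=
  stmt_17_general p hp0 hp1 hinf M x hx hxM
end

section
/- Let Y be a real Hilbert space, A : ℓ² → Y a continuous linear operator, y ∈ Y, α > 0, and let {p_k} be exponents with 0 < p_k for all k and sup_k p_k < 1. Let x = {x_k} ∈ ℓ¹ with ∑_k |x_k|^{p_k} < ∞ be a local minimizer of the functional F(u) = (1/2)‖Au − y‖²_Y + α ∑_k |u_k|^{p_k} over ℓ¹, in the sense that there exists ε > 0 such that F(x) ≤ F(u) for all u ∈ ℓ¹ with ∑_k |u_k − x_k| < ε. Then x is sparse: the set {k : x_k ≠ 0} is finite. -/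
/-!
Zeroing the coordinate `x k` moves `x` by `|x k|` in `ℓ¹`, lowers the penalty by
`α |x k| ^ p k` and raises the fidelity term by at most
`‖A‖ ‖A x - y‖ |x k| + ‖A‖² |x k|² / 2`. Local minimality therefore forces
`α ≤ C |x k| ^ (1 - p k) ≤ C |x k| ^ (1 - s)`, with `C = ‖A‖ ‖A x - y‖ + ‖A‖² / 2`, for every
small nonzero `x k`. Since `x k → 0`
and `1 - s > 0`, the right-hand side eventually drops below `α`, so only finitely many `x k`
are nonzero.
-/

open Filter Topology

open scoped ENNReal

local notation "ℓ²" => lp (fun _ : ℕ => ℝ) 2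

lemma lp.coeFn_sub_single_self {ι : Type*} [DecidableEq ι] {E : ι → Type*}
    [∀ i, NormedAddCommGroup (E i)] {p : ℝ≥0∞} (x : lp E p) (i : ι) :
    ⇑(x - lp.single p i (x i)) = Function.update (⇑x) i 0 := by
  rw [Pi.update_eq_sub_add_single, Pi.single_zero, add_zero]
  rfl

lemma norm_map_sub_sub_le {𝕜 E F : Type*} [NontriviallyNormedField 𝕜]
    [SeminormedAddCommGroup E] [NormedSpace 𝕜 E] [SeminormedAddCommGroup F] [NormedSpace 𝕜 F]
    (A : E →L[𝕜] F) (x h : E) (y : F) :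
    ‖A (x - h) - y‖ ≤ ‖A x - y‖ + ‖A‖ * ‖h‖ :=
  calc ‖A (x - h) - y‖ = ‖(A x - y) - A h‖ := by rw [map_sub, sub_right_comm]
    _ ≤ ‖A x - y‖ + ‖A h‖ := norm_sub_le _ _
    _ ≤ ‖A x - y‖ + ‖A‖ * ‖h‖ := by gcongr; exact A.le_opNorm h

noncomputable def lpFNorm {ι : Type*} (p : ι → ℝ) (u : ι → ℝ) : ℝ≥0∞ :=
  ∑' k, ENNReal.ofReal (|u k| ^ p k)

lemma lpFNorm_ne_top {ι : Type*} {p u : ι → ℝ} (h : Summable fun k => |u k| ^ p k) :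
    lpFNorm p u ≠ ∞ := by
  rw [lpFNorm, ← ENNReal.ofReal_tsum_of_nonneg (fun k => by positivity) h]
  exact ENNReal.ofReal_ne_top

lemma lpFNorm_eq_add_update_zero {ι : Type*} [DecidableEq ι] {p : ι → ℝ} (u : ι → ℝ) {k : ι}
    (hk : p k ≠ 0) :
    lpFNorm p u = ENNReal.ofReal (|u k| ^ p k) + lpFNorm p (Function.update u k 0) := by
  rw [lpFNorm, ENNReal.tsum_eq_add_tsum_ite k, lpFNorm]
  congr 2 with j
  rcases eq_or_ne j k with rfl | hj
  · simp [Real.zero_rpow hk]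
  · simp [hj]

lemma le_of_ofReal_add_mul_add_le {a b c α : ℝ} {P : ℝ≥0∞} (hP : P ≠ ∞) (ha : 0 ≤ a)
    (hb : 0 ≤ b) (hc : 0 ≤ c) (hα : 0 ≤ α)
    (h : ENNReal.ofReal a + ENNReal.ofReal α * (ENNReal.ofReal c + P) ≤
      ENNReal.ofReal b + ENNReal.ofReal α * P) :
    a + α * c ≤ b := by
  rwa [mul_add, ← add_assoc, ENNReal.add_le_add_iff_right (ENNReal.mul_ne_top ENNReal.ofReal_ne_top hP),
    ← ENNReal.ofReal_mul hα, ← ENNReal.ofReal_add ha (mul_nonneg hα hc),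
    ENNReal.ofReal_le_ofReal_iff hb] at h

lemma le_mul_rpow_of_mul_rpow_le_mul {α C t q s : ℝ} (ht0 : 0 < t) (ht1 : t ≤ 1) (hC : 0 ≤ C)
    (hqs : q ≤ s) (h : α * t ^ q ≤ C * t) :
    α ≤ C * t ^ (1 - s) := by
  have hsplit : C * t = C * t ^ (1 - q) * t ^ q := by
    rw [mul_assoc, ← Real.rpow_add ht0, sub_add_cancel, Real.rpow_one]
  calc α ≤ C * t ^ (1 - q) :=
        le_of_mul_le_mul_right (h.trans_eq hsplit) (Real.rpow_pos_of_pos ht0 q)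
    _ ≤ C * t ^ (1 - s) :=
        mul_le_mul_of_nonneg_left (Real.rpow_le_rpow_of_exponent_ge ht0 ht1 (by linarith)) hC

lemma tendsto_const_mul_rpow_nhds_zero (C : ℝ) {r : ℝ} (hr : 0 < r) :
    Tendsto (fun t : ℝ => C * t ^ r) (𝓝 0) (𝓝 0) := by
  simpa [Real.zero_rpow hr.ne'] using
    ((Real.continuousAt_rpow_const 0 r (Or.inr hr.le)).tendsto.const_mul C)

theorem finite_setOf_ne_zero_of_forall_le {ι : Type*} {f : ι → ℝ} {g : ℝ → ℝ} {a δ : ℝ}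
    (hf : Tendsto f cofinite (𝓝 0)) (hg : Tendsto g (𝓝 0) (𝓝 0)) (ha : 0 < a) (hδ : 0 < δ)
    (h : ∀ i, f i ≠ 0 → |f i| < δ → a ≤ g |f i|) :
    {i | f i ≠ 0}.Finite := by
  have hf' : Tendsto (fun i => |f i|) cofinite (𝓝 0) := by simpa using hf.abs
  have hzero : ∀ᶠ i in cofinite, f i = 0 := by
    filter_upwards [hf'.eventually (gt_mem_nhds hδ), (hg.comp hf').eventually (gt_mem_nhds ha)]
      with i hδi hai
    by_contra hi
    exact (h i hi hδi).not_gt hai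
  simpa using hzero

section LocalMinimizer

variable {Y : Type*} [SeminormedAddCommGroup Y] [NormedSpace ℝ Y]
  (A : ℓ² →L[ℝ] Y) (y : Y) (α : ℝ) (p : ℕ → ℝ)

noncomputable def tikhonovFunctional (u : ℓ²) : ℝ≥0∞ :=
  ENNReal.ofReal (1 / 2 * ‖A u - y‖ ^ 2) + ENNReal.ofReal α * lpFNorm p u

variable {A y α p}

lemma mul_rpow_le_of_tikhonovFunctional_le {x : ℓ²} {k : ℕ} (hα : 0 ≤ α) (hpk : p k ≠ 0)
    (hx : lpFNorm p x ≠ ∞)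
    (h : tikhonovFunctional A y α p x ≤ tikhonovFunctional A y α p (x - lp.single 2 k (x k))) :
    α * |x k| ^ p k ≤ (‖A‖ * ‖A x - y‖ + ‖A‖ ^ 2 / 2 * |x k|) * |x k| := by
  rw [tikhonovFunctional, tikhonovFunctional, lp.coeFn_sub_single_self,
    lpFNorm_eq_add_update_zero (⇑x) hpk] at h
  rw [lpFNorm_eq_add_update_zero (⇑x) hpk] at hx
  have hfid := le_of_ofReal_add_mul_add_le (ENNReal.add_ne_top.1 hx).2 (by positivity)
    (by positivity) (by positivity) hα h
  have hnorm : ‖A (x - lp.single 2 k (x k)) - y‖ ≤ ‖A x - y‖ + ‖A‖ * |x k| := by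
    simpa [lp.norm_single] using norm_map_sub_sub_le A x (lp.single 2 k (x k)) y
  have hsq := pow_le_pow_left₀ (norm_nonneg _) hnorm 2
  nlinarith

lemma le_mul_rpow_of_forall_tikhonovFunctional_le {x : ℓ²} {ε s : ℝ} (hα : 0 ≤ α)
    (hp0 : ∀ k, 0 < p k) (hps : ∀ k, p k ≤ s) (hx1 : Summable fun k => |x k|)
    (hx : lpFNorm p x ≠ ∞)
    (hmin : ∀ u : ℓ², (Summable fun k => |u k|) → (∑' k, |u k - x k|) < ε →
      tikhonovFunctional A y α p x ≤ tikhonovFunctional A y α p u)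
    {k : ℕ} (hk : x k ≠ 0) (hkε : |x k| < min ε 1) :
    α ≤ (‖A‖ * ‖A x - y‖ + ‖A‖ ^ 2 / 2) * |x k| ^ (1 - s) := by
  set u := x - lp.single 2 k (x k)
  have hu : ⇑u = Function.update (⇑x) k 0 := lp.coeFn_sub_single_self x k
  have hu1 : Summable fun j => |u j| := by
    refine hx1.of_nonneg_of_le (fun _ => abs_nonneg _) fun j => ?_
    rcases eq_or_ne j k with rfl | hj <;> simp [*]
  have hdist : ∑' j, |u j - x j| = |x k| := by
    rw [tsum_eq_single k fun j hj => by simp [hu, hj]]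
    simp [hu]
  have ht1 : |x k| ≤ 1 := hkε.le.trans (min_le_right _ _)
  have hfid := mul_rpow_le_of_tikhonovFunctional_le hα (hp0 k).ne' hx
    (hmin u hu1 (hdist ▸ hkε.trans_le (min_le_left _ _)))
  refine le_mul_rpow_of_mul_rpow_le_mul (abs_pos.2 hk) ht1 (by positivity) (hps k) ?_
  calc α * |x k| ^ p k ≤ (‖A‖ * ‖A x - y‖ + ‖A‖ ^ 2 / 2 * |x k|) * |x k| := hfid
    _ ≤ (‖A‖ * ‖A x - y‖ + ‖A‖ ^ 2 / 2) * |x k| := by gcongr; nlinarith [sq_nonneg ‖A‖]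

end LocalMinimizer

theorem stmt_18_general
    {Y : Type*} [NormedAddCommGroup Y] [InnerProductSpace ℝ Y]
    (A : lp (fun _ : ℕ => ℝ) 2 →L[ℝ] Y) (y : Y) (α : ℝ) (hα : 0 < α)
    (p : ℕ → ℝ) (hp0 : ∀ k, 0 < p k) (hsup : ∃ s : ℝ, s < 1 ∧ ∀ k, p k ≤ s)
    (x : lp (fun _ : ℕ => ℝ) 2)
    (hx1 : Summable fun k => |x k|)
    (hxp : Summable fun k => |x k| ^ p k)
    (ε : ℝ) (hε : 0 < ε)
    (hmin : ∀ u : lp (fun _ : ℕ => ℝ) 2, (Summable fun k => |u k|) →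
      (∑' k, |u k - x k|) < ε →
      ENNReal.ofReal ((1 / 2) * ‖A x - y‖ ^ 2) +
          ENNReal.ofReal α * ∑' k, ENNReal.ofReal (|x k| ^ p k) ≤
        ENNReal.ofReal ((1 / 2) * ‖A u - y‖ ^ 2) +
          ENNReal.ofReal α * ∑' k, ENNReal.ofReal (|u k| ^ p k)) :
    {k : ℕ | x k ≠ 0}.Finite := by
  obtain ⟨s, hs1, hps⟩ := hsup
  exact finite_setOf_ne_zero_of_forall_le hx1.of_abs.tendsto_cofinite_zero
    (tendsto_const_mul_rpow_nhds_zero _ (sub_pos.2 hs1)) hα (lt_min hε one_pos)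
    fun k hk hkε => le_mul_rpow_of_forall_tikhonovFunctional_le hα.le hp0 hps hx1
      (lpFNorm_ne_top hxp) hmin hk hkε

/-- Let `Y` be a real Hilbert space, `A : ℓ² → Y` continuous linear,
`y ∈ Y`, `α > 0`, and exponents `0 < p_k` with `sup_k p_k < 1` (phrased as: there is
`s < 1` with `p_k ≤ s` for all `k`). If `x ∈ ℓ¹` (regarded in `ℓ²`) with
`∑_k |x_k|^{p_k} < ∞` is a local minimizer of
`F(u) = ½‖Au − y‖² + α ∑_k |u_k|^{p_k}` over `ℓ¹` (the penalty series summed in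
`[0,∞]`), i.e. `F(x) ≤ F(u)` for all `u ∈ ℓ¹` with `∑_k |u_k − x_k| < ε`,
then `x` is sparse: `{k : x_k ≠ 0}` is finite. -/
theorem stmt_18
    {Y : Type*} [NormedAddCommGroup Y] [InnerProductSpace ℝ Y] [CompleteSpace Y]
    (A : lp (fun _ : ℕ => ℝ) 2 →L[ℝ] Y) (y : Y) (α : ℝ) (hα : 0 < α)
    (p : ℕ → ℝ) (hp0 : ∀ k, 0 < p k) (hsup : ∃ s : ℝ, s < 1 ∧ ∀ k, p k ≤ s)
    (x : lp (fun _ : ℕ => ℝ) 2)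
    (hx1 : Summable fun k => |x k|)
    (hxp : Summable fun k => |x k| ^ p k)
    (ε : ℝ) (hε : 0 < ε)
    (hmin : ∀ u : lp (fun _ : ℕ => ℝ) 2, (Summable fun k => |u k|) →
      (∑' k, |u k - x k|) < ε →
      ENNReal.ofReal ((1 / 2) * ‖A x - y‖ ^ 2) +
          ENNReal.ofReal α * ∑' k, ENNReal.ofReal (|x k| ^ p k) ≤
        ENNReal.ofReal ((1 / 2) * ‖A u - y‖ ^ 2) +
          ENNReal.ofReal α * ∑' k, ENNReal.ofReal (|u k| ^ p k)) :
    {k : ℕ | x k ≠ 0}.Finite :=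
  stmt_18_general A y α hα p hp0 hsup x hx1 hxp ε hε hmin
end
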